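/- arXiv:quant-ph/0701103 — 5 statements merged into one kernel-verified Lean document; each statement's English description precedes it below -/
import Mathlib

section
/- Let G = {U₁, …, U_r} be a finite subgroup of U(d) acting irreducibly on ℂ^d, let |φ⟩ = (1/√d) Σ_{i=0}^{d-1} |i⟩⊗|i⟩ ∈ ℂ^d⊗ℂ^d, and for each U ∈ G set |a_U⟩ = (U†⊗I)|φ⟩ and A_U = (d²/|G|)|a_U⟩⟨a_U|. Then Σ_{U∈G} A_U = I_{d²}, so {A_U}_{U∈G} is a rank-1 POVM. -/
open Matrix Kronecker

/-- The maximally entangled state |φ⟩ = (1/√d) Σᵢ |i⟩⊗|i⟩ on ℂ^d ⊗ ℂ^d. -/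
noncomputable def maxEnt (d : ℕ) : Fin d × Fin d → ℂ :=
  fun p => if p.1 = p.2 then ((Real.sqrt d : ℂ))⁻¹ else 0

/-- |a_U⟩ = (U† ⊗ I)|φ⟩. -/
noncomputable def aVec {d : ℕ} (U : Matrix (Fin d) (Fin d) ℂ) : Fin d × Fin d → ℂ :=
  (Uᴴ ⊗ₖ (1 : Matrix (Fin d) (Fin d) ℂ)).mulVec (maxEnt d)

lemma aVec_apply {d : ℕ} (U : Matrix (Fin d) (Fin d) ℂ) (p : Fin d × Fin d) :
    aVec U p = Uᴴ p.1 p.2 * ((Real.sqrt d : ℂ))⁻¹ := by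
  rcases p with ⟨i, j⟩
  simp only [aVec, mulVec, dotProduct, maxEnt]
  rw [Finset.sum_eq_single (j, j)]
  · simp
  · rintro ⟨k, l⟩ _ hkl
    simp only [kroneckerMap_apply, one_apply]
    by_cases h1 : k = l
    · subst h1
      have : ¬ j = k := fun h => hkl (by simp [h])
      simp [this]
    · simp [h1]
  · simp

/-- Schur's lemma consequence. -/
lemma schur {d : ℕ} (hd : 1 ≤ d) (G : Set (Matrix (Fin d) (Fin d) ℂ))
    (hirr : ∀ W : Submodule ℂ (Fin d → ℂ),
      (∀ g ∈ G, ∀ x ∈ W, g.mulVec x ∈ W) → W = ⊥ ∨ W = ⊤)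
    (C : Matrix (Fin d) (Fin d) ℂ) (hC : ∀ g ∈ G, g * C = C * g) :
    ∃ μ : ℂ, C = μ • 1 := by
  have : NeZero d := ⟨by omega⟩
  obtain ⟨μ, hμ⟩ := Module.End.exists_eigenvalue (C.mulVecLin)
  refine ⟨μ, ?_⟩
  have hWinv : ∀ g ∈ G, ∀ x ∈ Module.End.eigenspace C.mulVecLin μ,
      g.mulVec x ∈ Module.End.eigenspace C.mulVecLin μ := by
    intro g hg x hx
    rw [Module.End.mem_eigenspace_iff, Matrix.mulVecLin_apply] at hx ⊢
    rw [Matrix.mulVec_mulVec, ← hC g hg, ← Matrix.mulVec_mulVec, hx,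
      Matrix.mulVec_smul]
  have hW : Module.End.eigenspace C.mulVecLin μ = ⊤ := by
    rcases hirr _ hWinv with h | h
    · exact absurd h hμ
    · exact h
  ext i j
  have h2 : (Pi.single j 1 : Fin d → ℂ) ∈ Module.End.eigenspace C.mulVecLin μ := by
    rw [hW]; trivial
  rw [Module.End.mem_eigenspace_iff, Matrix.mulVecLin_apply] at h2
  have := congrFun h2 i
  simp only [mulVec_single, mul_one, Pi.smul_apply, Pi.single_apply, smul_eq_mul,
    MulOpposite.op_one, one_smul, Matrix.col_apply] at this
  rw [this, Matrix.smul_apply, Matrix.one_apply]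
  split <;> simp

/-- Let G = {U₁,…,U_r} be a finite subgroup of U(d) acting irreducibly on
ℂ^d, let |φ⟩ = (1/√d) Σ_i |i⟩⊗|i⟩, and for each U ∈ G set |a_U⟩ = (U†⊗I)|φ⟩ and
A_U = (d²/|G|)|a_U⟩⟨a_U|. Then Σ_{U∈G} A_U = I_{d²}, so {A_U} is a rank-1 POVM. -/
theorem stmt_2 {d : ℕ} (hd : 1 ≤ d) (G : Set (Matrix (Fin d) (Fin d) ℂ))
    (hfin : G.Finite)
    (hunitary : ∀ g ∈ G, g ∈ Matrix.unitaryGroup (Fin d) ℂ)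
    (hone : (1 : Matrix (Fin d) (Fin d) ℂ) ∈ G)
    (hmul : ∀ a ∈ G, ∀ b ∈ G, a * b ∈ G)
    (hinv : ∀ a ∈ G, aᴴ ∈ G)
    (hirr : ∀ W : Submodule ℂ (Fin d → ℂ),
      (∀ g ∈ G, ∀ x ∈ W, g.mulVec x ∈ W) → W = ⊥ ∨ W = ⊤) :
    ∑ U ∈ hfin.toFinset,
        (((d : ℂ) ^ 2 / (hfin.toFinset.card : ℂ)) •
          Matrix.vecMulVec (aVec U) (star (aVec U)))
      = (1 : Matrix (Fin d × Fin d) (Fin d × Fin d) ℂ) := by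
  set r := hfin.toFinset.card with hr
  have hdC : (d : ℂ) ≠ 0 := Nat.cast_ne_zero.mpr (by omega)
  have hrpos : 0 < r := Finset.card_pos.mpr ⟨1, hfin.mem_toFinset.mpr hone⟩
  have hrC : (r : ℂ) ≠ 0 := Nat.cast_ne_zero.mpr hrpos.ne'
  have hUU : ∀ g ∈ G, gᴴ * g = 1 := fun g hg => (hunitary g hg).1
  have hUU' : ∀ g ∈ G, g * gᴴ = 1 := fun g hg => (hunitary g hg).2
  -- key Schur computation
  have key : ∀ k i : Fin d,
      (∑ U ∈ hfin.toFinset, U * Matrix.single k i 1 * Uᴴ)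
        = (((r : ℂ) / d) * (if k = i then 1 else 0)) • 1 := by
    intro k i
    set E := Matrix.single k i (1 : ℂ) with hE
    set C := ∑ U ∈ hfin.toFinset, U * E * Uᴴ with hCdef
    have hbij : ∀ g ∈ G, ∑ U ∈ hfin.toFinset, (g * U) * E * (g * U)ᴴ = C := by
      intro g hg
      rw [hCdef]
      refine Finset.sum_nbij' (fun U => g * U) (fun U => gᴴ * U) ?_ ?_ ?_ ?_ ?_
      · intro U hU
        exact hfin.mem_toFinset.mpr (hmul g hg U (hfin.mem_toFinset.mp hU))
      · intro U hU
        exact hfin.mem_toFinset.mpr (hmul gᴴ (hinv g hg) U (hfin.mem_toFinset.mp hU))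
      · intro U hU
        show gᴴ * (g * U) = U
        rw [← mul_assoc, hUU g hg, one_mul]
      · intro U hU
        show g * (gᴴ * U) = U
        rw [← mul_assoc, hUU' g hg, one_mul]
      · intro U hU
        rfl
    have hcomm : ∀ g ∈ G, g * C = C * g := by
      intro g hg
      conv_rhs => rw [← hbij g hg]
      rw [hCdef, Finset.mul_sum, Finset.sum_mul]
      refine Finset.sum_congr rfl fun U hU => ?_
      rw [conjTranspose_mul, mul_assoc _ _ g, mul_assoc Uᴴ gᴴ g, hUU g hg, mul_one]
      simp [mul_assoc]
    obtain ⟨μ, hμ⟩ := schur hd G hirr C hcomm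
    have htr : C.trace = (r : ℂ) * (if k = i then 1 else 0) := by
      rw [hCdef, Matrix.trace_sum]
      have h1 : ∀ U ∈ hfin.toFinset,
          (U * E * Uᴴ).trace = (if k = i then 1 else 0) := by
        intro U hU
        have hUG := hfin.mem_toFinset.mp hU
        rw [Matrix.trace_mul_cycle, hUU U hUG, one_mul, hE]
        by_cases h : k = i
        · subst h; simp
        · rw [Matrix.trace_single_eq_of_ne (i := k) (j := i) (c := (1 : ℂ)) h, if_neg h]
      rw [Finset.sum_congr rfl h1, Finset.sum_const, nsmul_eq_mul]
    have htr2 : C.trace = μ * d := by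
      rw [hμ, Matrix.trace_smul, Matrix.trace_one]
      simp [Finset.card_univ, mul_comm]
    have hμval : μ = (r : ℂ) / d * (if k = i then 1 else 0) := by
      rw [div_mul_eq_mul_div, eq_div_iff hdC]
      exact htr2.symm.trans htr
    rw [hμ, hμval]
  -- entrywise
  ext ⟨i, j⟩ ⟨k, l⟩
  rw [Matrix.sum_apply]
  have hsq : ((Real.sqrt d : ℂ))⁻¹ * ((Real.sqrt d : ℂ))⁻¹ = ((d : ℂ))⁻¹ := by
    rw [← mul_inv, ← Complex.ofReal_mul, Real.mul_self_sqrt (Nat.cast_nonneg d),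
      Complex.ofReal_natCast]
  have hterm : ∀ U ∈ hfin.toFinset,
      ((((d : ℂ) ^ 2 / (r : ℂ)) •
          Matrix.vecMulVec (aVec U) (star (aVec U))) (i, j) (k, l))
        = ((d : ℂ) / r) * ((U * Matrix.single k i 1 * Uᴴ
            : Matrix (Fin d) (Fin d) ℂ) l j) := by
    intro U hU
    have hEval : (U * Matrix.single k i 1 * Uᴴ : Matrix (Fin d) (Fin d) ℂ) l j
        = U l k * Uᴴ i j := by
      rw [Matrix.mul_apply]
      rw [Finset.sum_eq_single i]
      · rw [Matrix.mul_apply, Finset.sum_eq_single k]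
        · simp [Matrix.single]
        · intro b _ hb; simp [Matrix.single, Ne.symm hb]
        · simp
      · intro b _ hb
        have : (U * Matrix.single k i 1 : Matrix (Fin d) (Fin d) ℂ) l b = 0 := by
          rw [Matrix.mul_apply]
          apply Finset.sum_eq_zero
          intro c _
          simp [Matrix.single, Ne.symm hb]
        rw [this, zero_mul]
      · simp
    rw [hEval, Matrix.smul_apply, Matrix.vecMulVec_apply, Pi.star_apply, aVec_apply, aVec_apply]
    simp only [smul_eq_mul]
    have hstar : star (Uᴴ (k, l).1 (k, l).2 * ((Real.sqrt d : ℂ))⁻¹)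
        = U l k * ((Real.sqrt d : ℂ))⁻¹ := by
      simp [conjTranspose_apply, star_inv₀, Complex.star_def, Complex.conj_ofReal]
    rw [hstar]
    have expand : (d:ℂ)^2 / r * (Uᴴ (i, j).1 (i, j).2 * ((Real.sqrt d : ℂ))⁻¹ *
          (U l k * ((Real.sqrt d : ℂ))⁻¹))
        = (d:ℂ)^2 / r * (((Real.sqrt d : ℂ))⁻¹ * ((Real.sqrt d : ℂ))⁻¹) *
          (U l k * Uᴴ i j) := by
      ring
    rw [expand, hsq]
    field_simp
  rw [Finset.sum_congr rfl hterm, ← Finset.mul_sum]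
  have hsum : (∑ U ∈ hfin.toFinset,
        (U * Matrix.single k i 1 * Uᴴ : Matrix (Fin d) (Fin d) ℂ) l j)
      = ((((r : ℂ) / d) * (if k = i then 1 else 0)) • (1 : Matrix (Fin d) (Fin d) ℂ)) l j := by
    rw [← key k i, Matrix.sum_apply]
  rw [hsum, Matrix.smul_apply, Matrix.one_apply, Matrix.one_apply]
  simp only [smul_eq_mul, Prod.mk.injEq]
  by_cases hki : i = k <;> by_cases hlj : j = l
  · subst hki; subst hlj
    simp only [if_pos rfl, and_self, mul_one, if_true]
    field_simp
  · simp [hki, hlj, Ne.symm hlj]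
  · simp [hki, hlj, Ne.symm hki]
  · simp [hki, hlj, Ne.symm hki]
end

section
/- Let G be a finite subgroup of U(d), let |φ⟩ = (1/√d) Σ_{i=0}^{d-1} |i⟩⊗|i⟩ ∈ ℂ^d⊗ℂ^d, and for U ∈ G set |a_U⟩ = (U†⊗I)|φ⟩. Then for every vector |α⟩ ∈ ℂ^d and every U ∈ G, applying ⟨a_U| to the first two tensor factors of |α⟩⊗|φ⟩ ∈ ℂ^d⊗ℂ^d⊗ℂ^d yields the vector (1/d)·U|α⟩ on the third factor; equivalently (|a_U⟩⟨a_U| ⊗ I_d)(|α⟩⊗|φ⟩) = (1/d)|a_U⟩⊗(U|α⟩). In particular, in the generalised teleportation scheme with POVM elements A_U = (d²/|G|)|a_U⟩⟨a_U|, outcome U leaves the third qudit in the pure state U|α⟩, and each outcome occurs with probability 1/|G|. -/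
open Matrix Kronecker

/-- The three-qudit state |α⟩⊗|φ⟩, indexed as ((first, second), third). -/
noncomputable def teleIn {d : ℕ} (α : Fin d → ℂ) : (Fin d × Fin d) × Fin d → ℂ :=
  fun q => α q.1.1 * maxEnt d (q.1.2, q.2)

/-- Let G be a finite subgroup of U(d), |φ⟩ = (1/√d) Σ_i |i⟩⊗|i⟩, and for
U ∈ G set |a_U⟩ = (U†⊗I)|φ⟩.  Then for every |α⟩ ∈ ℂ^d and U ∈ G, applying ⟨a_U| to the
first two tensor factors of |α⟩⊗|φ⟩ yields (1/d)·U|α⟩ on the third factor; equivalently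
(|a_U⟩⟨a_U| ⊗ I_d)(|α⟩⊗|φ⟩) = (1/d)|a_U⟩⊗(U|α⟩).  In particular, with POVM elements
A_U = (d²/|G|)|a_U⟩⟨a_U|, outcome U leaves the third qudit in the pure state U|α⟩, and
each outcome occurs with probability 1/|G| (for normalised |α⟩). -/
theorem stmt_3 {d : ℕ} (hd : 1 ≤ d) (G : Set (Matrix (Fin d) (Fin d) ℂ))
    (hfin : G.Finite)
    (hunitary : ∀ g ∈ G, g ∈ Matrix.unitaryGroup (Fin d) ℂ)
    (hone : (1 : Matrix (Fin d) (Fin d) ℂ) ∈ G)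
    (hmul : ∀ a ∈ G, ∀ b ∈ G, a * b ∈ G)
    (hinv : ∀ a ∈ G, aᴴ ∈ G)
    (α : Fin d → ℂ) (U : Matrix (Fin d) (Fin d) ℂ) (hU : U ∈ G) :
    -- applying ⟨a_U| to the first two factors of |α⟩⊗|φ⟩ gives (1/d)·U|α⟩
    (∀ k : Fin d,
      (∑ p : Fin d × Fin d, (starRingEnd ℂ) (aVec U p) * (α p.1 * maxEnt d (p.2, k)))
        = (d : ℂ)⁻¹ * U.mulVec α k) ∧
    -- equivalently (|a_U⟩⟨a_U| ⊗ I)(|α⟩⊗|φ⟩) = (1/d)|a_U⟩⊗(U|α⟩)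
    ((Matrix.vecMulVec (aVec U) (star (aVec U)) ⊗ₖ (1 : Matrix (Fin d) (Fin d) ℂ)).mulVec
        (teleIn α)
      = fun q => (d : ℂ)⁻¹ * (aVec U q.1 * U.mulVec α q.2)) ∧
    -- for normalised |α⟩, outcome U of the POVM {A_U} occurs with probability 1/|G|
    (star α ⬝ᵥ α = 1 →
      star (teleIn α) ⬝ᵥ
        ((((d : ℂ) ^ 2 / (hfin.toFinset.card : ℂ)) •
            (Matrix.vecMulVec (aVec U) (star (aVec U)) ⊗ₖ
              (1 : Matrix (Fin d) (Fin d) ℂ))).mulVec (teleIn α))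
        = ((hfin.toFinset.card : ℂ))⁻¹) := by

  -- basic scalar facts
  have hd0 : (0:ℝ) ≤ (d:ℝ) := Nat.cast_nonneg d
  have hs : ((Real.sqrt d : ℂ))⁻¹ * ((Real.sqrt d : ℂ))⁻¹ = (d : ℂ)⁻¹ := by
    rw [← mul_inv, ← Complex.ofReal_mul, Real.mul_self_sqrt hd0, Complex.ofReal_natCast]
  have hsconj : (starRingEnd ℂ) ((Real.sqrt d : ℂ))⁻¹ = ((Real.sqrt d : ℂ))⁻¹ := by
    rw [map_inv₀, Complex.conj_ofReal]
  have hm : ∀ j k : Fin d, maxEnt d (j, k) = if j = k then ((Real.sqrt d : ℂ))⁻¹ else 0 :=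
    fun j k => rfl
  -- closed form for aVec
  have ha : ∀ p : Fin d × Fin d,
      aVec U p = (starRingEnd ℂ) (U p.2 p.1) * ((Real.sqrt d : ℂ))⁻¹ := by
    intro p
    simp [aVec, mulVec, dotProduct, Matrix.one_apply, maxEnt,
      Fintype.sum_prod_type, conjTranspose_apply, mul_ite, ite_mul, mul_zero, zero_mul,
      Finset.sum_ite_eq, Finset.sum_ite_eq']
  -- part 1
  have key : ∀ k : Fin d,
      (∑ p : Fin d × Fin d, (starRingEnd ℂ) (aVec U p) * (α p.1 * maxEnt d (p.2, k)))
        = (d : ℂ)⁻¹ * U.mulVec α k := by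
    intro k
    have hterm : ∀ p : Fin d × Fin d,
        (starRingEnd ℂ) (aVec U p) * (α p.1 * maxEnt d (p.2, k))
          = (if p.2 = k then (d : ℂ)⁻¹ * (U k p.1 * α p.1) else 0) := by
      intro p
      rw [ha p, _root_.map_mul, hsconj, Complex.conj_conj, hm]
      by_cases h : p.2 = k
      · rw [if_pos h, if_pos h, h, ← hs]; ring
      · rw [if_neg h, if_neg h]; ring
    rw [Finset.sum_congr rfl (fun p _ => hterm p), Fintype.sum_prod_type]
    simp only [Finset.sum_ite_eq', Finset.mem_univ, if_true]
    rw [mulVec, dotProduct, Finset.mul_sum]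
  -- part 2
  have part2 : ((Matrix.vecMulVec (aVec U) (star (aVec U)) ⊗ₖ
        (1 : Matrix (Fin d) (Fin d) ℂ)).mulVec (teleIn α)
      = fun q => (d : ℂ)⁻¹ * (aVec U q.1 * U.mulVec α q.2)) := by
    funext q
    have hstep : ((vecMulVec (aVec U) (star (aVec U)) ⊗ₖ (1 : Matrix (Fin d) (Fin d) ℂ)).mulVec
        (teleIn α)) q
        = aVec U q.1 * ∑ p : Fin d × Fin d,
            (starRingEnd ℂ) (aVec U p) * (α p.1 * maxEnt d (p.2, q.2)) := by
      rw [mulVec, dotProduct, Fintype.sum_prod_type, Finset.mul_sum]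
      congr 1
      funext p12
      simp only [kroneckerMap_apply, vecMulVec_apply, Matrix.one_apply, teleIn,
        Pi.star_apply, starRingEnd_apply, mul_ite, ite_mul, mul_zero, zero_mul,
        mul_one, one_mul, Finset.sum_ite_eq, Finset.mem_univ, if_true]
      ring
    rw [hstep, key q.2]
    ring
  refine ⟨key, part2, ?_⟩
  -- part 3
  intro hnorm
  have hUu := hunitary U hU
  have hUU : Uᴴ * U = 1 := hUu.1
  have hvec : Uᴴ.mulVec (U.mulVec α) = α := by
    rw [Matrix.mulVec_mulVec, hUU, Matrix.one_mulVec]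
  have hUa : ∀ i : Fin d, ∑ j : Fin d, (starRingEnd ℂ) (U j i) * U.mulVec α j = α i := by
    intro i
    calc ∑ j : Fin d, (starRingEnd ℂ) (U j i) * U.mulVec α j
        = (Uᴴ.mulVec (U.mulVec α)) i := by
          simp [mulVec, dotProduct, conjTranspose_apply]
      _ = α i := by rw [hvec]
  rw [Matrix.smul_mulVec, part2]
  have hS : star (teleIn α) ⬝ᵥ (fun q : (Fin d × Fin d) × Fin d =>
        (d : ℂ)⁻¹ * (aVec U q.1 * U.mulVec α q.2))
      = (d : ℂ)⁻¹ * (d : ℂ)⁻¹ := by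
    rw [dotProduct]
    have hterm : ∀ q : (Fin d × Fin d) × Fin d,
        star (teleIn α) q * ((d : ℂ)⁻¹ * (aVec U q.1 * U.mulVec α q.2))
          = if q.1.2 = q.2 then
              (d : ℂ)⁻¹ * (d : ℂ)⁻¹ *
                ((starRingEnd ℂ) (α q.1.1) * ((starRingEnd ℂ) (U q.1.2 q.1.1) * U.mulVec α q.2))
            else 0 := by
      intro q
      have hT : star (teleIn α) q
          = (starRingEnd ℂ) (α q.1.1) * (starRingEnd ℂ) (maxEnt d (q.1.2, q.2)) := by
        show star (α q.1.1 * maxEnt d (q.1.2, q.2)) = _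
        rw [star_mul']
        rfl
      rw [hT, hm, ha q.1]
      by_cases h : q.1.2 = q.2
      · rw [if_pos h, if_pos h, hsconj, ← hs]; ring
      · rw [if_neg h, if_neg h, map_zero]; ring
    rw [Finset.sum_congr rfl (fun q _ => hterm q), Fintype.sum_prod_type]
    simp only [Finset.sum_ite_eq, Finset.mem_univ, if_true]
    rw [Fintype.sum_prod_type]
    have hinner : ∀ i : Fin d,
        (∑ j : Fin d, (d : ℂ)⁻¹ * (d : ℂ)⁻¹ *
          ((starRingEnd ℂ) (α i) * ((starRingEnd ℂ) (U j i) * U.mulVec α j)))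
        = (d : ℂ)⁻¹ * (d : ℂ)⁻¹ * ((starRingEnd ℂ) (α i) * α i) := by
      intro i
      rw [← Finset.mul_sum, ← Finset.mul_sum, hUa i]
    rw [Finset.sum_congr rfl (fun i _ => hinner i), ← Finset.mul_sum]
    have hsum1 : (∑ i : Fin d, (starRingEnd ℂ) (α i) * α i) = 1 := by
      rw [← hnorm, dotProduct]
      rfl
    rw [hsum1, mul_one]
  rw [dotProduct_smul, hS, smul_eq_mul]
  have hdC : (d : ℂ) ≠ 0 := Nat.cast_ne_zero.2 (Nat.one_le_iff_ne_zero.mp hd)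
  have hn : ((hfin.toFinset.card : ℂ)) ≠ 0 := by
    have hpos : 0 < hfin.toFinset.card :=
      Finset.card_pos.2 ⟨1, hfin.mem_toFinset.2 hone⟩
    exact Nat.cast_ne_zero.2 hpos.ne'
  field_simp
end

section
/- Let G be a finite subgroup of U(d) acting irreducibly on ℂ^d and let T ⊆ G be a transversal of Z(G) in G, i.e. a subset containing exactly one element from each coset of Z(G). Then a unitary N ∈ U(d) is a projective normaliser of G if and only if N is a projective normaliser of the set T; and a unitary N ∈ U(d²) is a projective normaliser of G⊗G if and only if N is a projective normaliser of the set T⊗T = {A⊗B : A, B ∈ T}. -/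
open Matrix Kronecker

/-- `N` is a projective normaliser of the set of matrices `S`:
for every `g ∈ S` there are `g' ∈ S` and a unit complex number `c` with `N g N† = c g'`. -/
def ProjNorm {n : Type*} [Fintype n] (N : Matrix n n ℂ) (S : Set (Matrix n n ℂ)) : Prop :=
  ∀ g ∈ S, ∃ g' ∈ S, ∃ c : ℂ, ‖c‖ = 1 ∧ N * g * Nᴴ = c • g'

/-- The tensor (Kronecker) square of a set of matrices. -/
def tensorSet {d : ℕ} (S : Set (Matrix (Fin d) (Fin d) ℂ)) :
    Set (Matrix (Fin d × Fin d) (Fin d × Fin d) ℂ) :=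
  {x | ∃ a ∈ S, ∃ b ∈ S, x = a ⊗ₖ b}

/-!
By Schur's lemma every central element of an irreducible unitary group is a unit scalar, so each
`g ∈ G` is a phase multiple `c • t` of its representative `t ∈ T`, i.e. `G ⊆ S¹ • T`; then also
`G ⊗ G ⊆ S¹ • (T ⊗ T)`. Projective normalisation only sees a set up to such phases, which are
absorbed into the scalar `c` in `N g N† = c g'`.
-/

open Pointwise

lemma projNorm_iff_of_subset_of_subset_sphere_smul {n : Type*} [Fintype n] (N : Matrix n n ℂ)
    {S T : Set (Matrix n n ℂ)} (hTS : T ⊆ S) (hST : S ⊆ Metric.sphere (0 : ℂ) 1 • T) :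
    ProjNorm N S ↔ ProjNorm N T := by
  constructor
  · intro h t ht
    obtain ⟨g', hg', c, hc, hNt⟩ := h t (hTS ht)
    obtain ⟨u, hu, t', ht', rfl⟩ := Set.mem_smul.mp (hST hg')
    rw [mem_sphere_zero_iff_norm] at hu
    exact ⟨t', ht', c * u, by rw [norm_mul, hc, hu, one_mul], by rw [hNt, smul_smul]⟩
  · intro h g hg
    obtain ⟨u, hu, t, ht, rfl⟩ := Set.mem_smul.mp (hST hg)
    rw [mem_sphere_zero_iff_norm] at hu
    obtain ⟨t', ht', c, hc, hNt⟩ := h t ht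
    refine ⟨t', hTS ht', u * c, by rw [norm_mul, hc, hu, one_mul], ?_⟩
    rw [Matrix.mul_smul, Matrix.smul_mul, hNt, smul_smul]

section TensorSet

variable {d : ℕ} {S T : Set (Matrix (Fin d) (Fin d) ℂ)}

lemma tensorSet_mono (h : T ⊆ S) : tensorSet T ⊆ tensorSet S := by
  rintro _ ⟨a, ha, b, hb, rfl⟩
  exact ⟨a, h ha, b, h hb, rfl⟩

lemma tensorSet_subset_sphere_smul (h : S ⊆ Metric.sphere (0 : ℂ) 1 • T) :
    tensorSet S ⊆ Metric.sphere (0 : ℂ) 1 • tensorSet T := by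
  rintro _ ⟨_, ha, _, hb, rfl⟩
  obtain ⟨u, hu, a, ha', rfl⟩ := Set.mem_smul.mp (h ha)
  obtain ⟨v, hv, b, hb', rfl⟩ := Set.mem_smul.mp (h hb)
  refine Set.mem_smul.mpr ⟨u * v, ?_, a ⊗ₖ b, ⟨a, ha', b, hb', rfl⟩, ?_⟩
  · rw [mem_sphere_zero_iff_norm] at hu hv ⊢
    rw [norm_mul, hu, hv, one_mul]
  · rw [Matrix.smul_kronecker, Matrix.kronecker_smul, smul_smul]

end TensorSet

section Schur

variable {n : Type*} [Fintype n] [DecidableEq n]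

lemma exists_eq_smul_one_of_forall_commute [Nonempty n] {G : Set (Matrix n n ℂ)}
    (hirr : ∀ W : Submodule ℂ (n → ℂ), (∀ g ∈ G, ∀ x ∈ W, g *ᵥ x ∈ W) → W = ⊥ ∨ W = ⊤)
    {z : Matrix n n ℂ} (hz : ∀ g ∈ G, z * g = g * z) :
    ∃ c : ℂ, z = c • 1 := by
  obtain ⟨c, hc⟩ := Module.End.exists_eigenvalue (Matrix.mulVecLin z)
  have hinvariant : ∀ g ∈ G, ∀ x ∈ Module.End.eigenspace (Matrix.mulVecLin z) c,
      g *ᵥ x ∈ Module.End.eigenspace (Matrix.mulVecLin z) c := by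
    intro g hg x hx
    rw [Module.End.mem_eigenspace_iff, Matrix.mulVecLin_apply] at hx ⊢
    rw [Matrix.mulVec_mulVec, hz g hg, ← Matrix.mulVec_mulVec, hx, Matrix.mulVec_smul]
  have htop := (hirr _ hinvariant).resolve_left hc
  refine ⟨c, Matrix.toLin'.injective (LinearMap.ext fun x => ?_)⟩
  have hx := Module.End.mem_eigenspace_iff.mp (htop ▸ Submodule.mem_top : x ∈ _)
  simpa using hx

lemma norm_eq_one_of_smul_one_mem_unitaryGroup [Nonempty n] {c : ℂ}
    (hc : c • (1 : Matrix n n ℂ) ∈ Matrix.unitaryGroup n ℂ) : ‖c‖ = 1 := by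
  rw [Matrix.mem_unitaryGroup_iff, star_smul, star_one, smul_mul_smul, mul_one] at hc
  have hconj : c * star c = 1 := by
    rw [← Matrix.scalar_inj (n := n)]
    simpa [Matrix.smul_one_eq_diagonal] using hc
  have hsq : ‖c‖ ^ 2 = 1 := by
    rw [← Complex.ofReal_inj, Complex.ofReal_pow, ← Complex.mul_conj', Complex.ofReal_one]
    exact hconj
  nlinarith [norm_nonneg c]

lemma exists_norm_eq_one_and_eq_smul_one_of_forall_commute {G : Set (Matrix n n ℂ)}
    (hirr : ∀ W : Submodule ℂ (n → ℂ), (∀ g ∈ G, ∀ x ∈ W, g *ᵥ x ∈ W) → W = ⊥ ∨ W = ⊤)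
    {z : Matrix n n ℂ} (hzU : z ∈ Matrix.unitaryGroup n ℂ) (hz : ∀ g ∈ G, z * g = g * z) :
    ∃ c : ℂ, ‖c‖ = 1 ∧ z = c • 1 := by
  cases isEmpty_or_nonempty n
  · exact ⟨1, norm_one, Subsingleton.elim _ _⟩
  obtain ⟨c, rfl⟩ := exists_eq_smul_one_of_forall_commute hirr hz
  exact ⟨c, norm_eq_one_of_smul_one_mem_unitaryGroup hzU, rfl⟩

lemma subset_sphere_smul_of_subset_mul {G Z S T : Set (Matrix n n ℂ)}
    (hirr : ∀ W : Submodule ℂ (n → ℂ), (∀ g ∈ G, ∀ x ∈ W, g *ᵥ x ∈ W) → W = ⊥ ∨ W = ⊤)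
    (hZ : ∀ z ∈ Z, z ∈ Matrix.unitaryGroup n ℂ ∧ ∀ g ∈ G, z * g = g * z) (hS : S ⊆ Z * T) :
    S ⊆ Metric.sphere (0 : ℂ) 1 • T := by
  intro _ hs
  obtain ⟨z, hzZ, t, ht, rfl⟩ := Set.mem_mul.mp (hS hs)
  obtain ⟨c, hc, rfl⟩ :=
    exists_norm_eq_one_and_eq_smul_one_of_forall_commute hirr (hZ z hzZ).1 (hZ z hzZ).2
  exact Set.mem_smul.mpr ⟨c, mem_sphere_zero_iff_norm.mpr hc, t, ht, by rw [smul_mul, one_mul]⟩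

end Schur

theorem stmt_4_general {d : ℕ} (G : Set (Matrix (Fin d) (Fin d) ℂ))
    (hunitary : ∀ g ∈ G, g ∈ Matrix.unitaryGroup (Fin d) ℂ)
    (hirr : ∀ W : Submodule ℂ (Fin d → ℂ),
      (∀ g ∈ G, ∀ x ∈ W, g.mulVec x ∈ W) → W = ⊥ ∨ W = ⊤)
    (T : Set (Matrix (Fin d) (Fin d) ℂ)) (hTG : T ⊆ G)
    -- T contains exactly one element from each coset of Z(G) in G
    (htrans : ∀ g ∈ G, ∃! t, t ∈ T ∧ ∃ z ∈ {z ∈ G | ∀ h ∈ G, z * h = h * z}, g = z * t) :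
    (∀ N ∈ Matrix.unitaryGroup (Fin d) ℂ, ProjNorm N G ↔ ProjNorm N T) ∧
    (∀ N ∈ Matrix.unitaryGroup (Fin d × Fin d) ℂ,
      ProjNorm N (tensorSet G) ↔ ProjNorm N (tensorSet T)) := by
  have hGT : G ⊆ Metric.sphere (0 : ℂ) 1 • T := by
    refine subset_sphere_smul_of_subset_mul (Z := {z ∈ G | ∀ h ∈ G, z * h = h * z}) hirr
      (fun z hz => ⟨hunitary z hz.1, hz.2⟩) ?_
    intro g hg
    obtain ⟨t, ⟨ht, z, hz, rfl⟩, -⟩ := htrans g hg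
    exact Set.mem_mul.mpr ⟨z, hz, t, ht, rfl⟩
  exact ⟨fun N _ => projNorm_iff_of_subset_of_subset_sphere_smul N hTG hGT,
    fun N _ => projNorm_iff_of_subset_of_subset_sphere_smul N (tensorSet_mono hTG)
      (tensorSet_subset_sphere_smul hGT)⟩

/-- Let G be a finite subgroup of U(d) acting irreducibly on ℂ^d and let
T ⊆ G be a transversal of Z(G) in G.  Then N ∈ U(d) is a projective normaliser of G iff
N is a projective normaliser of the set T; and N ∈ U(d²) is a projective normaliser of
G⊗G iff N is a projective normaliser of T⊗T = {A⊗B : A,B ∈ T}. -/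
theorem stmt_4 {d : ℕ} (G : Set (Matrix (Fin d) (Fin d) ℂ))
    (hfin : G.Finite)
    (hunitary : ∀ g ∈ G, g ∈ Matrix.unitaryGroup (Fin d) ℂ)
    (hone : (1 : Matrix (Fin d) (Fin d) ℂ) ∈ G)
    (hmul : ∀ a ∈ G, ∀ b ∈ G, a * b ∈ G)
    (hinv : ∀ a ∈ G, aᴴ ∈ G)
    (hirr : ∀ W : Submodule ℂ (Fin d → ℂ),
      (∀ g ∈ G, ∀ x ∈ W, g.mulVec x ∈ W) → W = ⊥ ∨ W = ⊤)
    (T : Set (Matrix (Fin d) (Fin d) ℂ)) (hTG : T ⊆ G)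
    -- T contains exactly one element from each coset of Z(G) in G
    (htrans : ∀ g ∈ G, ∃! t, t ∈ T ∧ ∃ z ∈ {z ∈ G | ∀ h ∈ G, z * h = h * z}, g = z * t) :
    (∀ N ∈ Matrix.unitaryGroup (Fin d) ℂ, ProjNorm N G ↔ ProjNorm N T) ∧
    (∀ N ∈ Matrix.unitaryGroup (Fin d × Fin d) ℂ,
      ProjNorm N (tensorSet G) ↔ ProjNorm N (tensorSet T)) :=
  stmt_4_general G hunitary hirr T hTG htrans
end

section
/- For every finite subgroup G of U(d) there exists a finite subgroup H of SU(d) such that the central quotient H/Z(H) is isomorphic as a group to G/Z(G). Consequently the set of groups arising (up to isomorphism) as central quotients of finite subgroups of U(d) coincides with the set of groups arising as central quotients of finite subgroups of SU(d). -/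
open Matrix

namespace Stmt6Aux

variable {d : ℕ}

lemma pow_roots_finite (N : ℕ) (hN : N ≠ 0) : {c : ℂ | c ^ N = 1}.Finite := by
  have hp : (Polynomial.X ^ N - 1 : Polynomial ℂ) ≠ 0 := by
    intro h
    have := congrArg (Polynomial.eval 0) h
    simp [zero_pow hN] at this
  refine (Polynomial.finite_setOf_isRoot hp).subset ?_
  intro c hc
  simp only [Set.mem_setOf_eq, Polynomial.IsRoot, Polynomial.eval_sub, Polynomial.eval_pow,
    Polynomial.eval_X, Polynomial.eval_one, sub_eq_zero] at *
  exact hc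

/-- The subgroup H: unit-determinant scalar multiples of elements of G. -/
def Hsub (G : Subgroup (Matrix.unitaryGroup (Fin d) ℂ)) :
    Subgroup (Matrix.unitaryGroup (Fin d) ℂ) where
  carrier := {x | (x.1).det = 1 ∧
    ∃ c : ℂ, c ^ (d * Nat.card G) = 1 ∧ ∃ g : G, x.1 = c • g.1.1}
  one_mem' := ⟨by simp, 1, one_pow _, 1, by simp⟩
  mul_mem' := by
    rintro x y ⟨hx, c, hc, g, hg⟩ ⟨hy, c', hc', g', hg'⟩
    refine ⟨?_, c * c', by rw [mul_pow, hc, hc', one_mul], g * g', ?_⟩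
    · show (x.1 * y.1).det = 1
      rw [det_mul, hx, hy, one_mul]
    · show x.1 * y.1 = (c * c') • (g.1.1 * g'.1.1)
      rw [hg, hg', Matrix.smul_mul, Matrix.mul_smul, smul_smul]
  inv_mem' := by
    rintro x ⟨hx, c, hc, g, hg⟩
    refine ⟨?_, star c, by rw [← star_pow, hc, star_one], g⁻¹, ?_⟩
    · show (star x.1).det = 1
      rw [Matrix.star_eq_conjTranspose, det_conjTranspose, hx, star_one]
    · show star x.1 = star c • (star g.1.1)
      rw [hg, star_smul]

variable {G : Subgroup (Matrix.unitaryGroup (Fin d) ℂ)}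

lemma det_one_of_mem {x : Matrix.unitaryGroup (Fin d) ℂ} (hx : x ∈ Hsub G) :
    (x.1).det = 1 := hx.1

lemma central_of_scalar (w : Hsub G) (e : ℂ) (hw : w.1.1 = e • 1) :
    w ∈ Subgroup.center (Hsub G) := by
  rw [Subgroup.mem_center_iff]
  intro z
  apply Subtype.ext; apply Subtype.ext
  show z.1.1 * w.1.1 = w.1.1 * z.1.1
  rw [hw, Matrix.mul_smul, Matrix.smul_mul, Matrix.mul_one, Matrix.one_mul]

lemma mk_eq_of_scalar (x y : Hsub G) (e : ℂ) (h : x.1.1 = e • y.1.1) :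
    (x : Hsub G ⧸ Subgroup.center (Hsub G)) = y := by
  rw [QuotientGroup.eq]
  apply central_of_scalar _ (star e)
  show ((x⁻¹ : Hsub G) * y).1.1 = star e • 1
  show (x⁻¹ : Hsub G).1.1 * y.1.1 = star e • 1
  have hinv : (x⁻¹ : Hsub G).1.1 = star x.1.1 := rfl
  rw [hinv, h, star_smul, Matrix.smul_mul, (y.1.2.1 : star y.1.1 * y.1.1 = 1)]

lemma mk_eq_of_rel (x y : Hsub G) (c c' : ℂ) (hc' : c' ≠ 0)
    (A : Matrix (Fin d) (Fin d) ℂ) (hx : x.1.1 = c • A) (hy : y.1.1 = c' • A) :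
    (x : Hsub G ⧸ Subgroup.center (Hsub G)) = y := by
  refine mk_eq_of_scalar x y (c * c'⁻¹) ?_
  rw [hx, hy, smul_smul, mul_assoc, inv_mul_cancel₀ hc', mul_one]

lemma exists_lift (hd : d ≠ 0) (hG : Finite G) (g : G) :
    ∃ x : Hsub G, ∃ c : ℂ, c ≠ 0 ∧ x.1.1 = c • g.1.1 := by
  have hn : Nat.card G ≠ 0 := Nat.card_pos.ne'
  -- determinant of g is a root of unity
  have hdetpow : (g.1.1).det ^ Nat.card G = 1 := by
    have h1 : g ^ Nat.card G = 1 := pow_card_eq_one'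
    have h3 : (g.1.1) ^ Nat.card G = 1 := by
      have h2 : ((g ^ Nat.card G : G) : Matrix.unitaryGroup (Fin d) ℂ).1
          = ((1 : G) : Matrix.unitaryGroup (Fin d) ℂ).1 := by rw [h1]
      simp only [SubgroupClass.coe_pow, SubmonoidClass.coe_pow, OneMemClass.coe_one] at h2
      exact h2
    rw [← det_pow, h3, det_one]
  have hdetne : (g.1.1).det ≠ 0 := (Matrix.UnitaryGroup.det_isUnit g.1).ne_zero
  obtain ⟨c, hcd⟩ : ∃ c : ℂ, c ^ d = ((g.1.1).det)⁻¹ :=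
    IsAlgClosed.exists_pow_nat_eq _ (Nat.pos_of_ne_zero hd)
  have hcN : c ^ (d * Nat.card G) = 1 := by
    rw [pow_mul, hcd, inv_pow, hdetpow, inv_one]
  have hc0 : c ≠ 0 := by
    intro h; rw [h, zero_pow (by positivity)] at hcN; exact zero_ne_one hcN
  -- c has norm 1
  have hcs : star c * c = 1 := by
    have := Complex.norm_eq_one_of_pow_eq_one hcN (by positivity)
    calc star c * c = (Complex.normSq c : ℂ) := by
          rw [mul_comm]; exact (Complex.mul_conj c)
      _ = 1 := by
          rw [Complex.normSq_eq_norm_sq]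
          norm_cast
          rw [show ‖c‖ = 1 from this]; ring
  have hmem : c • g.1.1 ∈ Matrix.unitaryGroup (Fin d) ℂ := by
    rw [Matrix.mem_unitaryGroup_iff']
    rw [star_smul, Matrix.smul_mul, Matrix.mul_smul, smul_smul,
      (g.1.2.1 : star g.1.1 * g.1.1 = 1), hcs, one_smul]
  have hdet : (c • g.1.1).det = 1 := by
    rw [Matrix.det_smul, Fintype.card_fin, hcd, inv_mul_cancel₀ hdetne]
  exact ⟨⟨⟨c • g.1.1, hmem⟩, hdet, c, hcN, g, rfl⟩, c, hc0, rfl⟩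

end Stmt6Aux

open Stmt6Aux in
/-- For every finite subgroup G of U(d) there exists a finite subgroup H of
SU(d) (a subgroup of U(d) all of whose elements have determinant 1) such that the
central quotient H/Z(H) is isomorphic as a group to G/Z(G).  Consequently the set of
groups arising as central quotients of finite subgroups of U(d) coincides with the set
of groups arising as central quotients of finite subgroups of SU(d). -/
theorem stmt_6 {d : ℕ} (G : Subgroup (Matrix.unitaryGroup (Fin d) ℂ)) (hG : Finite G) :
    ∃ H : Subgroup (Matrix.unitaryGroup (Fin d) ℂ), Finite H ∧
      (∀ h : H, ((h : Matrix.unitaryGroup (Fin d) ℂ) : Matrix (Fin d) (Fin d) ℂ).det = 1) ∧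
      Nonempty ((H ⧸ Subgroup.center H) ≃* (G ⧸ Subgroup.center G)) := by
  rcases Nat.eq_zero_or_pos d with hd0 | hdpos
  · subst hd0
    exact ⟨G, hG, fun h => Matrix.det_fin_zero, ⟨MulEquiv.refl _⟩⟩
  have hd : d ≠ 0 := hdpos.ne'
  have hn : Nat.card G ≠ 0 := Nat.card_pos.ne'
  set H := Hsub G with hH
  -- Finiteness
  have hfin : Finite H := by
    have hGset : (G : Set (Matrix.unitaryGroup (Fin d) ℂ)).Finite := G.carrier.toFinite
    have hS : ((fun p : ℂ × Matrix.unitaryGroup (Fin d) ℂ => p.1 • p.2.1) ''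
        ({c : ℂ | c ^ (d * Nat.card G) = 1} ×ˢ (G : Set _))).Finite :=
      ((pow_roots_finite _ (by positivity)).prod hGset).image _
    have hsub : (H : Set (Matrix.unitaryGroup (Fin d) ℂ)) ⊆
        Subtype.val ⁻¹' ((fun p : ℂ × Matrix.unitaryGroup (Fin d) ℂ => p.1 • p.2.1) ''
          ({c : ℂ | c ^ (d * Nat.card G) = 1} ×ˢ (G : Set _))) := by
      rintro x ⟨hx, c, hc, g, hg⟩
      exact ⟨(c, g.1), ⟨hc, g.2⟩, hg.symm⟩
    have : ((H : Set (Matrix.unitaryGroup (Fin d) ℂ))).Finite :=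
      ((hS.preimage (Subtype.val_injective.injOn)).subset hsub)
    exact this.to_subtype
  -- the homomorphism ψ : G →* H ⧸ Z(H)
  let lift : G → H := fun g => (exists_lift hd hG g).choose
  have hlift : ∀ g : G, ∃ c : ℂ, c ≠ 0 ∧ (lift g).1.1 = c • g.1.1 :=
    fun g => (exists_lift hd hG g).choose_spec
  let f : G → H ⧸ Subgroup.center H := fun g => QuotientGroup.mk (lift g)
  have hmul : ∀ g g' : G, f (g * g') = f g * f g' := by
    intro g g'
    obtain ⟨c, hc0, hc⟩ := hlift g
    obtain ⟨c', hc0', hc'⟩ := hlift g'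
    obtain ⟨c'', hc0'', hc''⟩ := hlift (g * g')
    show QuotientGroup.mk (lift (g * g')) = QuotientGroup.mk (lift g * lift g')
    refine mk_eq_of_rel _ _ c'' (c * c') (mul_ne_zero hc0 hc0') ((g * g').1.1) hc'' ?_
    show (lift g).1.1 * (lift g').1.1 = (c * c') • ((g.1 * g'.1).1)
    rw [hc, hc', Matrix.smul_mul, Matrix.mul_smul, smul_smul]
    rfl
  let ψ : G →* H ⧸ Subgroup.center H := MonoidHom.mk' f hmul
  have hsurj : Function.Surjective ψ := by
    intro q
    induction q using QuotientGroup.induction_on with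
    | H x =>
      obtain ⟨hx, c, hcN, g, hg⟩ := x.2
      have hc0 : c ≠ 0 := by
        intro h; rw [h, zero_pow (by positivity)] at hcN; exact zero_ne_one hcN
      obtain ⟨c', hc0', hc'⟩ := hlift g
      exact ⟨g, mk_eq_of_rel _ _ c' c hc0 (g.1.1) hc' hg⟩
  have hker : ψ.ker = Subgroup.center G := by
    ext g
    obtain ⟨c, hc0, hc⟩ := hlift g
    constructor
    · intro hgk
      have hx : lift g ∈ Subgroup.center H := by
        rw [← QuotientGroup.eq_one_iff]
        exact hgk
      rw [Subgroup.mem_center_iff]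
      intro g'
      obtain ⟨c', hc0', hc'⟩ := hlift g'
      have hcomm : lift g' * lift g = lift g * lift g' :=
        (Subgroup.mem_center_iff.mp hx (lift g'))
      have hmx : (lift g').1.1 * (lift g).1.1 = (lift g).1.1 * (lift g').1.1 := by
        exact_mod_cast congrArg (fun z : H => z.1.1) hcomm
      rw [hc, hc', Matrix.smul_mul, Matrix.mul_smul, smul_smul, Matrix.smul_mul,
        Matrix.mul_smul, smul_smul, mul_comm c' c] at hmx
      have hmx2 : g'.1.1 * g.1.1 = g.1.1 * g'.1.1 :=
        smul_right_injective _ (mul_ne_zero hc0 hc0') hmx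
      apply Subtype.ext; apply Subtype.ext
      exact_mod_cast hmx2
    · intro hgz
      show f g = 1
      rw [QuotientGroup.eq_one_iff]
      rw [Subgroup.mem_center_iff]
      intro z
      obtain ⟨hz, cz, hczN, gz, hgz'⟩ := z.2
      have hcomm : gz * g = g * gz := Subgroup.mem_center_iff.mp hgz gz
      have hmcomm : gz.1.1 * g.1.1 = g.1.1 * gz.1.1 := by
        exact_mod_cast congrArg (fun w : G => w.1.1) hcomm
      apply Subtype.ext; apply Subtype.ext
      show z.1.1 * (lift g).1.1 = (lift g).1.1 * z.1.1
      rw [hc, hgz', Matrix.smul_mul, Matrix.mul_smul, smul_smul, Matrix.smul_mul,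
        Matrix.mul_smul, smul_smul, mul_comm cz c, hmcomm]
  refine ⟨H, hfin, fun h => h.2.1, ?_⟩
  have e1 : G ⧸ ψ.ker ≃* H ⧸ Subgroup.center H :=
    QuotientGroup.quotientKerEquivOfSurjective ψ hsurj
  have e2 : G ⧸ ψ.ker ≃* G ⧸ Subgroup.center G :=
    QuotientGroup.quotientMulEquivOfEq hker
  exact ⟨e1.symm.trans e2⟩
end

section
/- Let G be a finite subgroup of U(d) and let G' be the subgroup of U(d) generated by G together with all matrices ζI where ζ ranges over the |G|-th roots of unity. Then a unitary N ∈ U(d) is a projective normaliser of G if and only if N is a linear normaliser of G', i.e. N G' N† = G'. -/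
open Matrix

/-!
Because scalars are central, `G'` is the finite set `μₙ • G` of root-of-unity multiples of
elements of `G`, where `n = |G|`. If `N g N† = c g'`, raising both sides to the `n`-th power and
using Lagrange's theorem (`g ^ n = g' ^ n = 1`) gives `c ^ n = 1`; so conjugation by `N` maps
`μₙ • G` into itself, and being injective on a finite set it permutes it. Conversely, if
conjugation permutes `μₙ • G`, then `N g N† = ζ g'` with `ζ ^ n = 1`, hence `|ζ| = 1`.
-/

open Pointwise

theorem Submonoid.coe_closure_union_smul_one_eq_smul {R A : Type*} [CommSemiring R] [Semiring A]
    [Algebra R A] {G : Set A} (hone : 1 ∈ G) (hmul : ∀ a ∈ G, ∀ b ∈ G, a * b ∈ G) (k : ℕ) :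
    (closure (G ∪ {x | ∃ ζ : R, ζ ^ k = 1 ∧ x = ζ • (1 : A)}) : Set A) =
      {ζ : R | ζ ^ k = 1} • G := by
  let M : Submonoid A :=
    { carrier := {ζ : R | ζ ^ k = 1} • G
      one_mem' := ⟨1, one_pow k, 1, hone, one_smul R 1⟩
      mul_mem' := by
        rintro _ _ ⟨ζ, hζ, g, hg, rfl⟩ ⟨ξ, hξ, h, hh, rfl⟩
        refine ⟨ζ * ξ, ?_, g * h, hmul g hg h hh, (smul_mul_smul_comm ζ g ξ h).symm⟩
        rw [Set.mem_ofPred_eq, mul_pow, hζ, hξ, one_mul] }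
  refine subset_antisymm (closure_le (S := M) |>.mpr ?_) ?_
  · rintro x (hx | ⟨ζ, hζ, rfl⟩)
    · exact ⟨1, one_pow k, x, hx, one_smul R x⟩
    · exact ⟨ζ, hζ, 1, hone, rfl⟩
  · intro x hx
    obtain ⟨ζ, hζ, g, hg, rfl⟩ := Set.mem_smul.mp hx
    rw [← smul_one_mul ζ g]
    exact mul_mem (subset_closure (Or.inr ⟨ζ, hζ, rfl⟩)) (subset_closure (Or.inl hg))

/-- For infinite `G` this is trivial, since then `G.ncard = 0`. -/
theorem pow_ncard_eq_one_of_subset_unitary {M : Type*} [Monoid M] [StarMul M] {G : Set M}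
    (hunitary : G ⊆ unitary M) (hone : 1 ∈ G) (hmul : ∀ a ∈ G, ∀ b ∈ G, a * b ∈ G)
    (hinv : ∀ a ∈ G, star a ∈ G) {g : M} (hg : g ∈ G) :
    g ^ G.ncard = 1 := by
  let H : Subgroup (unitary M) :=
    { carrier := Subtype.val ⁻¹' G
      one_mem' := hone
      mul_mem' := fun ha hb => hmul _ ha _ hb
      inv_mem' := fun ha => hinv _ ha }
  have hcard : Nat.card H = G.ncard :=
    Set.ncard_preimage_of_injective_subset_range Subtype.val_injective (by simpa using hunitary)
  have := congrArg (fun x : H => ((x : unitary M) : M))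
    (pow_card_eq_one' (x := (⟨⟨g, hunitary hg⟩, hg⟩ : H)))
  simpa [hcard] using this

section ScalarMultiples

variable {K A : Type*} [Field K] [Ring A] [Algebra K A]

theorem pow_eq_one_of_eq_smul_of_pow_eq_one [Nontrivial A] {k : ℕ} {c : K} {g h : A}
    (hg : g ^ k = 1) (hh : h ^ k = 1) (e : h = c • g) : c ^ k = 1 := by
  refine (algebraMap K A).injective ?_
  calc algebraMap K A (c ^ k) = c ^ k • g ^ k := by rw [Algebra.algebraMap_eq_smul_one, hg]
    _ = h ^ k := by rw [e, smul_pow]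
    _ = algebraMap K A 1 := by rw [hh, map_one]

theorem mapsTo_smul_of_forall_eq_smul {F : Type*} [FunLike F A A] [AlgHomClass F K A A]
    {φ : F} {G : Set A} {k : ℕ} (hone : 1 ∈ G) (hpow : ∀ g ∈ G, g ^ k = 1)
    (hφ : ∀ g ∈ G, ∃ g' ∈ G, ∃ c : K, φ g = c • g') :
    Set.MapsTo φ ({ζ : K | ζ ^ k = 1} • G) ({ζ : K | ζ ^ k = 1} • G) := by
  rintro _ ⟨ζ, hζ, g, hg, rfl⟩
  rcases subsingleton_or_nontrivial A with hA | hA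
  · exact ⟨1, one_pow k, 1, hone, Subsingleton.elim _ _⟩
  obtain ⟨g', hg', c, e⟩ := hφ g hg
  have hc : c ^ k = 1 :=
    pow_eq_one_of_eq_smul_of_pow_eq_one (hpow g' hg') (by rw [← map_pow, hpow g hg, map_one]) e
  refine ⟨ζ * c, ?_, g', hg', ?_⟩
  · rw [Set.mem_ofPred_eq, mul_pow, hζ, hc, one_mul]
  · rw [map_smul, e, smul_smul]

end ScalarMultiples

/-- Let G be a finite subgroup of U(d) and let G' be the subgroup of U(d)
generated by G together with all matrices ζI where ζ ranges over the |G|-th roots of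
unity.  Then a unitary N ∈ U(d) is a projective normaliser of G iff N is a linear
normaliser of G', i.e. N G' N† = G'. -/
theorem stmt_8 {d : ℕ} (G : Set (Matrix (Fin d) (Fin d) ℂ))
    (hfin : G.Finite)
    (hunitary : ∀ g ∈ G, g ∈ Matrix.unitaryGroup (Fin d) ℂ)
    (hone : (1 : Matrix (Fin d) (Fin d) ℂ) ∈ G)
    (hmul : ∀ a ∈ G, ∀ b ∈ G, a * b ∈ G)
    (hinv : ∀ a ∈ G, aᴴ ∈ G)
    (G' : Set (Matrix (Fin d) (Fin d) ℂ))
    (hG' : G' = (Submonoid.closure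
      (G ∪ {x | ∃ ζ : ℂ, ζ ^ G.ncard = 1 ∧ x = ζ • (1 : Matrix (Fin d) (Fin d) ℂ)}) :
        Submonoid (Matrix (Fin d) (Fin d) ℂ)))
    (N : Matrix (Fin d) (Fin d) ℂ) (hN : N ∈ Matrix.unitaryGroup (Fin d) ℂ) :
    ProjNorm N G ↔ (fun g => N * g * Nᴴ) '' G' = G' := by
  have hk : 0 < G.ncard := (Set.ncard_pos hfin).mpr ⟨1, hone⟩
  have hpow (g) (hg : g ∈ G) : g ^ G.ncard = 1 :=
    pow_ncard_eq_one_of_subset_unitary hunitary hone hmul hinv hg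
  have hfin' : ({ζ : ℂ | ζ ^ G.ncard = 1} • G).Finite :=
    (Polynomial.nthRootsFinset_toSet hk (1 : ℂ) ▸ Finset.finite_toSet _).smul hfin
  let φ := Unitary.conjStarAlgAut ℂ (Matrix (Fin d) (Fin d) ℂ) ⟨N, hN⟩
  change ProjNorm N G ↔ φ '' G' = G'
  rw [hG', Submonoid.coe_closure_union_smul_one_eq_smul hone hmul]
  constructor
  · intro h
    have hmaps := mapsTo_smul_of_forall_eq_smul (φ := φ) hone hpow
      fun g hg => (h g hg).imp fun _ ⟨hg', c, _, e⟩ => ⟨hg', c, e⟩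
    exact ((hfin'.injOn_iff_bijOn_of_mapsTo hmaps).mp φ.injective.injOn).image_eq
  · intro h g hg
    obtain ⟨ζ, hζ, g', hg', e⟩ : φ g ∈ {ζ : ℂ | ζ ^ G.ncard = 1} • G :=
      h ▸ Set.mem_image_of_mem φ ⟨1, one_pow _, g, hg, one_smul ℂ g⟩
    exact ⟨g', hg', ζ, Complex.norm_eq_one_of_pow_eq_one hζ hk.ne', e.symm⟩
end
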